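/- arXiv:math/0606311 — 3 statements merged into one kernel-verified Lean document; each statement's English description precedes it below -/
import Mathlib

section
/- Let M be a real vector space with a symmetric bilinear form of signature having at least two positive squares, and let v1, v2 ∈ M be vectors with q(v1) > 0 and q(v2) > 0. Then there exists a vector v ∈ M such that the bilinear form is positive definite on both the plane spanned by v and v1 and the plane spanned by v and v2. -/
open Module

/-- The restriction of the bilinear form `B` to the submodule `W` is positive definite. -/
def PosDefOn {L : Type*} [AddCommGroup L] [Module ℝ L]
    (B : L →ₗ[ℝ] L →ₗ[ℝ] ℝ) (W : Submodule ℝ L) : Prop :=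
  ∀ x ∈ W, x ≠ 0 → 0 < B x x

/-!
If `B v₁ v₂ = 0`, the vector `v = v₁ + v₂` works. Otherwise pick `u ≠ 0` in the positive
plane with `B u v₁ = 0`, so `q u > 0`, and put `v = (B u v₂) v₁ - (B v₁ v₂) u`. Then
`B v v₂ = 0`, so the Gram determinant of `v, v₂` is `q v * q v₂ > 0`, while that of `v, v₁`
is `(B v₁ v₂)² q u q v₁ > 0`. A plane spanned by `x, y` with `q x > 0` and positive Gram
determinant is positive definite.
-/

namespace LinearMap

variable {M : Type*} [AddCommGroup M] [Module ℝ M] (B : M →ₗ[ℝ] M →ₗ[ℝ] ℝ)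

lemma apply_smul_add_smul_self (hsymm : ∀ x y, B x y = B y x) (x y : M) (p q : ℝ) :
    B (p • x + q • y) (p • x + q • y) = p ^ 2 * B x x + 2 * p * q * B x y + q ^ 2 * B y y := by
  simp only [map_add, map_smul, add_apply, smul_apply, smul_eq_mul, hsymm y x]
  ring

section GramPos

variable (hsymm : ∀ x y, B x y = B y x) {x y : M} (hx : 0 < B x x)
  (hgram : B x y ^ 2 < B x x * B y y)
include hsymm hx hgram

lemma apply_smul_add_smul_self_pos_of_gram_pos {p q : ℝ} (hpq : p ≠ 0 ∨ q ≠ 0) :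
    0 < B (p • x + q • y) (p • x + q • y) := by
  rw [apply_smul_add_smul_self B hsymm]
  -- `B x x * B z z = (p B x x + q B x y)² + q² (B x x B y y - (B x y)²)`
  have hgram' : 0 < B x x * B y y - B x y ^ 2 := sub_pos.mpr hgram
  refine pos_of_mul_pos_right (a := B x x) ?_ hx.le
  rcases eq_or_ne q 0 with rfl | hq
  · have hp : p ≠ 0 := hpq.resolve_right (not_not.mpr rfl)
    have : 0 < p ^ 2 * B x x ^ 2 := by positivity
    linarith
  · have : 0 < q ^ 2 * (B x x * B y y - B x y ^ 2) := by positivity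
    nlinarith [sq_nonneg (p * B x x + q * B x y)]

lemma linearIndependent_pair_of_gram_pos : LinearIndependent ℝ ![x, y] := by
  refine LinearIndependent.pair_iff.mpr fun p q hpq => ?_
  by_contra h
  have := apply_smul_add_smul_self_pos_of_gram_pos B hsymm hx hgram (not_and_or.mp h)
  simp [hpq] at this

lemma finrank_span_pair_and_posDefOn_of_gram_pos :
    finrank ℝ (Submodule.span ℝ {x, y}) = 2 ∧ PosDefOn B (Submodule.span ℝ {x, y}) := by
  constructor
  · have := finrank_span_eq_card (linearIndependent_pair_of_gram_pos B hsymm hx hgram)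
    rwa [Matrix.range_cons, Matrix.range_cons, Matrix.range_empty, Set.union_empty,
      Set.singleton_union, Fintype.card_fin] at this
  · intro z hz hz0
    obtain ⟨p, q, rfl⟩ := Submodule.mem_span_pair.mp hz
    refine apply_smul_add_smul_self_pos_of_gram_pos B hsymm hx hgram ?_
    by_contra! h
    simp [h.1, h.2] at hz0

end GramPos

lemma exists_apply_eq_zero_and_pos_of_posDefOn {W : Submodule ℝ M} (hW : finrank ℝ W = 2)
    (hWpos : PosDefOn B W) (y : M) : ∃ u : M, B u y = 0 ∧ 0 < B u u := by
  have : FiniteDimensional ℝ W := Module.finite_of_finrank_pos (by omega)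
  obtain ⟨u, hu, hu0⟩ := Submodule.exists_mem_ne_zero_of_ne_bot <|
    ((B.flip y).comp W.subtype).ker_ne_bot_of_finrank_lt (by rw [finrank_self, hW]; norm_num)
  exact ⟨u, hu, hWpos u u.2 (by simpa using hu0)⟩

end LinearMap

theorem stmt0_general (M : Type*) [AddCommGroup M] [Module ℝ M]
    (B : M →ₗ[ℝ] M →ₗ[ℝ] ℝ)
    (hsymm : ∀ x y, B x y = B y x)
    (hpos2 : ∃ W : Submodule ℝ M, finrank ℝ W = 2 ∧ PosDefOn B W)
    (v1 v2 : M) (h1 : 0 < B v1 v1) (h2 : 0 < B v2 v2) :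
    ∃ v : M,
      (finrank ℝ (Submodule.span ℝ {v, v1}) = 2 ∧
        PosDefOn B (Submodule.span ℝ {v, v1})) ∧
      (finrank ℝ (Submodule.span ℝ {v, v2}) = 2 ∧
        PosDefOn B (Submodule.span ℝ {v, v2})) := by
  have plane := @LinearMap.finrank_span_pair_and_posDefOn_of_gram_pos M _ _ B hsymm
  by_cases hb : B v1 v2 = 0
  · have hv := LinearMap.apply_smul_add_smul_self B hsymm v1 v2 1 1
    simp only [one_smul, hb] at hv
    have hv1 : B (v1 + v2) v1 = B v1 v1 := by simp [hsymm v2 v1, hb]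
    have hv2 : B (v1 + v2) v2 = B v2 v2 := by simp [hb]
    refine ⟨v1 + v2, plane ?_ ?_, plane ?_ ?_⟩ <;>
      simp only [hv, hv1, hv2] <;> nlinarith [mul_pos h1 h2]
  · obtain ⟨W, hW, hWpos⟩ := hpos2
    obtain ⟨u, hu, hqu⟩ := LinearMap.exists_apply_eq_zero_and_pos_of_posDefOn B hW hWpos v1
    set v := B u v2 • v1 + (-B v1 v2) • u
    have hv := LinearMap.apply_smul_add_smul_self B hsymm v1 u (B u v2) (-B v1 v2)
    rw [hsymm v1 u, hu] at hv
    have hv1 : B v v1 = B u v2 * B v1 v1 := by simp [v, hu]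
    have hv2 : B v v2 = 0 := by
      simp only [v, map_add, map_smul, LinearMap.add_apply, LinearMap.smul_apply, smul_eq_mul]
      ring
    have hqv : 0 < B v v := by rw [hv]; nlinarith [sq_pos_of_ne_zero hb, sq_nonneg (B u v2)]
    refine ⟨v, plane hqv ?_, plane hqv ?_⟩
    · rw [hv1, hv]
      nlinarith [mul_pos (mul_pos (sq_pos_of_ne_zero hb) hqu) h1]
    · rw [hv2, zero_pow two_ne_zero]
      exact mul_pos hqv h2

theorem stmt0 (M : Type*) [AddCommGroup M] [Module ℝ M] [FiniteDimensional ℝ M]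
    (B : M →ₗ[ℝ] M →ₗ[ℝ] ℝ)
    (hsymm : ∀ x y, B x y = B y x)
    (hnd : ∀ x, (∀ y, B x y = 0) → x = 0)
    (hpos2 : ∃ W : Submodule ℝ M, finrank ℝ W = 2 ∧ PosDefOn B W)
    (v1 v2 : M) (h1 : 0 < B v1 v1) (h2 : 0 < B v2 v2) :
    ∃ v : M,
      (finrank ℝ (Submodule.span ℝ {v, v1}) = 2 ∧
        PosDefOn B (Submodule.span ℝ {v, v1})) ∧
      (finrank ℝ (Submodule.span ℝ {v, v2}) = 2 ∧
        PosDefOn B (Submodule.span ℝ {v, v2})) :=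
  stmt0_general M B hsymm hpos2 v1 v2 h1 h2
end

section
/- Let (L, q) be a real quadratic space with at least 3 positive squares and let c : L → L be an involutive isometry whose (+1)-eigenspace has positive inertia index 1 (so L₋ has positive inertia index at least 2). Then the fixed-point set Per(c) of the induced involution on the period domain is nonempty. -/
open Module

def PosIndex {L : Type*} [AddCommGroup L] [Module ℝ L]
    (B : L →ₗ[ℝ] L →ₗ[ℝ] ℝ) (S : Submodule ℝ L) (k : ℕ) : Prop :=
  (∃ W : Submodule ℝ L, W ≤ S ∧ PosDefOn B W ∧ finrank ℝ W = k) ∧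
  (∀ W : Submodule ℝ L, W ≤ S → PosDefOn B W → finrank ℝ W ≤ k)

theorem stmt10 (L : Type*) [AddCommGroup L] [Module ℝ L] [FiniteDimensional ℝ L]
    (B : L →ₗ[ℝ] L →ₗ[ℝ] ℝ)
    (hsymm : ∀ x y, B x y = B y x)
    (hnd : ∀ x, (∀ y, B x y = 0) → x = 0)
    (hpos3 : ∃ W : Submodule ℝ L, PosDefOn B W ∧ finrank ℝ W = 3)
    (c : L →ₗ[ℝ] L) (hc : c ∘ₗ c = LinearMap.id)
    (hiso : ∀ x y, B (c x) (c y) = B x y)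
    (hLp : PosIndex B (LinearMap.ker (c - LinearMap.id)) 1) :
    ∃ wp wm : L,
      wp ∈ LinearMap.ker (c - LinearMap.id) ∧
      wm ∈ LinearMap.ker (c + LinearMap.id) ∧
      B wp wp = B wm wm ∧ 0 < B wp wp := by
  classical
  have hcc : ∀ x, c (c x) = x := by
    intro x
    have := LinearMap.ext_iff.mp hc x
    simpa using this
  -- cross terms between eigenspaces vanish
  have hcross : ∀ u v : L, c u = u → c v = -v → B u v = 0 := by
    intro u v hu hv
    have h := hiso u v
    rw [hu, hv, map_neg] at h
    linarith [h]
  -- get wp from hLp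
  obtain ⟨⟨W1, hW1le, hW1pos, hW1rk⟩, hmax⟩ := hLp
  have hnt : Nontrivial W1 := by
    apply Module.nontrivial_of_finrank_pos (R := ℝ)
    rw [hW1rk]; norm_num
  obtain ⟨x, hxne⟩ := exists_ne (0 : W1)
  set wp : L := (x : L) with hwpdef
  have hwp0 : wp ≠ 0 := by
    intro h
    apply hxne
    exact Subtype.ext h
  have hwpW : wp ∈ W1 := x.2
  have hwpmem : wp ∈ LinearMap.ker (c - LinearMap.id) := hW1le hwpW
  have hwppos : 0 < B wp wp := hW1pos wp hwpW hwp0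
  -- a positive vector in the (-1)-eigenspace
  have hexm : ∃ v : L, c v = -v ∧ 0 < B v v := by
    by_contra hcon
    push_neg at hcon
    have hneg : ∀ v : L, c v = -v → B v v ≤ 0 := fun v hv => hcon v hv
    obtain ⟨W, hWpos, hWrk⟩ := hpos3
    set p : L →ₗ[ℝ] L := (2⁻¹ : ℝ) • (LinearMap.id + c) with hpdef
    have hp_apply : ∀ x : L, p x = (2⁻¹ : ℝ) • (x + c x) := by
      intro x; simp [hpdef]
    have hp_fix : ∀ x : L, c (p x) = p x := by
      intro x
      rw [hp_apply, map_smul, map_add, hcc, add_comm (c x) x]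
    have hp_minus : ∀ x : L, c (x - p x) = -(x - p x) := by
      intro x
      rw [map_sub, hp_fix, hp_apply]
      module
    -- decomposition of the quadratic form
    have hdecomp : ∀ w : L, B w w = B (p w) (p w) + B (w - p w) (w - p w) := by
      intro w
      have hc1 : B (p w) (w - p w) = 0 := hcross _ _ (hp_fix w) (hp_minus w)
      have hc2 : B (w - p w) (p w) = 0 := by rw [hsymm]; exact hc1
      have : w = p w + (w - p w) := by abel
      calc B w w = B (p w + (w - p w)) (p w + (w - p w)) := by rw [← this]
        _ = B (p w) (p w) + B (p w) (w - p w) + (B (w - p w) (p w)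
            + B (w - p w) (w - p w)) := by
              simp only [map_add, LinearMap.add_apply]; ring
        _ = B (p w) (p w) + B (w - p w) (w - p w) := by rw [hc1, hc2]; ring
    -- p is injective on W
    have hinj : Function.Injective (p ∘ₗ W.subtype) := by
      rw [← LinearMap.ker_eq_bot]
      rw [Submodule.eq_bot_iff]
      rintro ⟨w, hw⟩ hker
      have hpw : p w = 0 := hker
      ext
      show w = 0
      by_contra hw0
      have h1 : 0 < B w w := hWpos w hw hw0
      have h2 : B w w ≤ 0 := by
        have := hneg (w - p w) (hp_minus w)
        rw [hdecomp w, hpw] at h1 ⊢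
        simp only [map_zero, LinearMap.zero_apply, zero_add] at h1 ⊢
        rw [hpw] at this
        simpa using this
      linarith
    -- image of W under p
    have himg : Submodule.map p W = LinearMap.range (p ∘ₗ W.subtype) := by
      rw [LinearMap.range_comp, Submodule.range_subtype]
    have hle : Submodule.map p W ≤ LinearMap.ker (c - LinearMap.id) := by
      rintro u ⟨w, _, rfl⟩
      simp [LinearMap.mem_ker, hp_fix w]
    have hposmap : PosDefOn B (Submodule.map p W) := by
      rintro u ⟨w, hw, rfl⟩ hu0
      have hw0 : w ≠ 0 := by rintro rfl; simp at hu0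
      have h1 : 0 < B w w := hWpos w hw hw0
      have h2 : B (w - p w) (w - p w) ≤ 0 := hneg _ (hp_minus w)
      have := hdecomp w
      linarith
    have hrk : finrank ℝ (Submodule.map p W) = 3 := by
      rw [himg, LinearMap.finrank_range_of_inj hinj, hWrk]
    have := hmax _ hle hposmap
    rw [hrk] at this
    omega
  obtain ⟨v, hv, hvpos⟩ := hexm
  -- scale v
  set a := B wp wp with ha
  set b := B v v with hb
  set t := Real.sqrt (a / b) with ht
  refine ⟨wp, t • v, hwpmem, ?_, ?_, hwppos⟩
  · simp [LinearMap.mem_ker, hv]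
  · have htt : t * t = a / b := Real.mul_self_sqrt (div_nonneg hwppos.le hvpos.le)
    have h1 : B (t • v) (t • v) = (t * t) * b := by
      simp only [map_smul, LinearMap.smul_apply, smul_eq_mul]; ring
    rw [h1, htt, div_mul_cancel₀ _ (ne_of_gt hvpos)]
end

section
/- Let L₋ be a real quadratic space of signature (2, m) and l ∈ L₋ with q(l) > 0. Given any orthogonal pair (ω₋, γ) in L₋ with q(ω₋) > 0 and q(γ) > 0, there exists a finite sequence of pairs, each obtained from the previous one either by a rotation in the positive definite plane they span, or by replacing γ with another vector γ' such that the plane spanned by ω₋ and γ' is positive definite and ⟨ω₋, γ'⟩ = 0, ending at a pair (ω₋', γ') with γ' = l. -/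
open Module

/-- One elementary move on orthogonal positive pairs `(ω₋, γ)`:
either a rotation in the positive definite plane they span (extended by the
identity on its orthogonal complement), or replacing `γ` by another vector
`γ'` orthogonal to `ω₋` and spanning with it a positive definite plane. -/
def Step {L : Type*} [AddCommGroup L] [Module ℝ L] [FiniteDimensional ℝ L]
    (B : L →ₗ[ℝ] L →ₗ[ℝ] ℝ) (p q : L × L) : Prop :=
  (PosDefOn B (Submodule.span ℝ {p.1, p.2}) ∧
    ∃ R : L ≃ₗ[ℝ] L,
      (∀ x y, B (R x) (R y) = B x y) ∧
      LinearMap.det (R : L →ₗ[ℝ] L) = 1 ∧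
      (∀ x : L, (∀ w ∈ Submodule.span ℝ {p.1, p.2}, B x w = 0) → R x = x) ∧
      (∀ w ∈ Submodule.span ℝ {p.1, p.2}, R w ∈ Submodule.span ℝ {p.1, p.2}) ∧
      q = (R p.1, R p.2)) ∨
  (q.1 = p.1 ∧ B p.1 q.2 = 0 ∧
    PosDefOn B (Submodule.span ℝ {p.1, q.2}) ∧
    finrank ℝ (Submodule.span ℝ {p.1, q.2}) = 2)

/-! Fix a positive definite plane `W`. It contains nonzero vectors `u ⊥ ω` and `w ⊥ l`, and the
planes `span {ω, u}` and `span {u, w} ≤ W` are positive definite. Inside a positive definite plane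
through the current first vector `x` and a target `y`, one replacement of the second vector (by the
component of `y` orthogonal to `x`) followed by one rotation (a product of two reflections, hence of
determinant one) moves `x` onto the line of `y`. This carries `ω` to the line of `u`, then to the
line of `w`, and since `w ⊥ l` a final replacement makes the second vector `l`. -/

open Submodule (span)
open Relation (ReflTransGen)

theorem Module.det_preReflection {K V : Type*} [Field K] [AddCommGroup V] [Module K V]
    [FiniteDimensional K V] (x : V) (f : Dual K V) :
    LinearMap.det (preReflection x f) = 1 - f x := by
  let b := Module.finBasis K V
  rw [← LinearMap.det_toMatrix b, preReflection, map_sub, LinearMap.toMatrix_id,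
    LinearMap.toMatrix_smulRight, Matrix.vecMulVec_eq (ι := Unit), Matrix.det_one_sub_mul_comm,
    Matrix.det_unique, Matrix.sub_apply, Matrix.one_apply_eq,
    Matrix.replicateRow_mul_replicateCol_apply]
  conv_rhs => rw [← b.sum_repr x]
  simp only [map_sum, map_smul, smul_eq_mul, dotProduct, Function.comp_apply, mul_comm]

theorem Module.det_reflection {K V : Type*} [Field K] [AddCommGroup V] [Module K V]
    [FiniteDimensional K V] {x : V} {f : Dual K V} (h : f x = 2) :
    LinearMap.det (reflection h : V →ₗ[K] V) = -1 := by
  rw [show (reflection h : V →ₗ[K] V) = preReflection x f from rfl, det_preReflection, h]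
  norm_num

section BilinearForm

variable {L : Type*} [AddCommGroup L] [Module ℝ L] {B : L →ₗ[ℝ] L →ₗ[ℝ] ℝ}

theorem PosDefOn.mono {V W : Submodule ℝ L} (hW : PosDefOn B W) (hVW : V ≤ W) :
    PosDefOn B V :=
  fun x hx => hW x (hVW hx)

theorem linearIndependent_pair_of_orthogonal {u v : L} (hu : B u u ≠ 0) (hv : v ≠ 0)
    (huv : B u v = 0) : LinearIndependent ℝ ![u, v] := by
  refine LinearIndependent.pair_iff.mpr fun s t hst => ?_
  have hs : s = 0 := by
    have := congrArg (B u) hst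
    simp only [map_add, map_smul, huv, smul_eq_mul, mul_zero, add_zero, map_zero] at this
    exact (mul_eq_zero.mp this).resolve_right hu
  subst hs
  simp only [zero_smul, zero_add] at hst
  exact ⟨rfl, (smul_eq_zero.mp hst).resolve_right hv⟩

theorem finrank_span_pair_of_orthogonal {u v : L} (hu : B u u ≠ 0) (hv : v ≠ 0)
    (huv : B u v = 0) : finrank ℝ (span ℝ {u, v}) = 2 := by
  rw [← Matrix.range_cons_cons_empty u v ![],
    finrank_span_eq_card (linearIndependent_pair_of_orthogonal hu hv huv), Fintype.card_fin]

theorem posDefOn_span_pair_of_orthogonal (hsymm : ∀ x y, B x y = B y x) {u v : L}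
    (hu : 0 < B u u) (hv : 0 < B v v) (huv : B u v = 0) : PosDefOn B (span ℝ {u, v}) := by
  rintro x hx hx0
  obtain ⟨s, t, rfl⟩ := Submodule.mem_span_pair.mp hx
  have hvu : B v u = 0 := hsymm v u ▸ huv
  have hst : s ≠ 0 ∨ t ≠ 0 := by
    by_contra! h
    simp [h.1, h.2] at hx0
  have hexp : B (s • u + t • v) (s • u + t • v) = s ^ 2 * B u u + t ^ 2 * B v v := by
    simp only [map_add, map_smul, LinearMap.add_apply, LinearMap.smul_apply, smul_eq_mul, huv, hvu]
    ring
  rw [hexp]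
  rcases hst with hs | ht
  · nlinarith [sq_pos_of_ne_zero hs, sq_nonneg t]
  · nlinarith [sq_pos_of_ne_zero ht, sq_nonneg s]

theorem exists_mem_ne_zero_orthogonal [FiniteDimensional ℝ L] (B : L →ₗ[ℝ] L →ₗ[ℝ] ℝ)
    (W : Submodule ℝ L) (hW : 1 < finrank ℝ W) (y : L) :
    ∃ u ∈ W, u ≠ 0 ∧ B y u = 0 := by
  have hker : LinearMap.ker ((B y).domRestrict W) ≠ ⊥ :=
    LinearMap.ker_ne_bot_of_finrank_lt (by rwa [finrank_self])
  obtain ⟨u, hu, hu0⟩ := Submodule.ne_bot_iff _ |>.mp hker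
  exact ⟨u, u.2, by simpa using hu0, by simpa using hu⟩

noncomputable def bilinReflection (B : L →ₗ[ℝ] L →ₗ[ℝ] ℝ) {v : L} (hv : B v v ≠ 0) : L ≃ₗ[ℝ] L :=
  Module.reflection (x := v) (f := (2 / B v v) • B v) (by simp [hv])

theorem bilinReflection_apply {v : L} (hv : B v v ≠ 0) (y : L) :
    bilinReflection B hv y = y - (2 / B v v * B v y) • v := by
  simp [bilinReflection, Module.reflection_apply]

@[simp]
theorem bilinReflection_apply_self {v : L} (hv : B v v ≠ 0) : bilinReflection B hv v = -v :=
  Module.reflection_apply_self _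

theorem bilinReflection_apply_of_orthogonal {v y : L} (hv : B v v ≠ 0) (hy : B v y = 0) :
    bilinReflection B hv y = y := by
  simp [bilinReflection_apply, hy]

theorem bilinReflection_isometry (hsymm : ∀ x y, B x y = B y x) {v : L} (hv : B v v ≠ 0)
    (x y : L) : B (bilinReflection B hv x) (bilinReflection B hv y) = B x y := by
  simp only [bilinReflection_apply, map_sub, map_smul, LinearMap.sub_apply, LinearMap.smul_apply,
    smul_eq_mul, hsymm x v]
  field_simp
  ring

theorem bilinReflection_sub_apply (hsymm : ∀ x y, B x y = B y x) {u z : L} (huz : B u u = B z z)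
    (h : B (u - z) (u - z) ≠ 0) : bilinReflection B h u = z := by
  have hexp : B (u - z) (u - z) = 2 * B (u - z) u := by
    simp only [map_sub, LinearMap.sub_apply, hsymm z u, huz]
    ring
  have hu : B (u - z) u ≠ 0 := fun h0 => h (by rw [hexp, h0, mul_zero])
  have hcoef : 2 / (2 * B (u - z) u) * B (u - z) u = 1 := by field_simp
  rw [bilinReflection_apply, hexp, hcoef, one_smul, sub_sub_cancel]

theorem det_bilinReflection [FiniteDimensional ℝ L] {v : L} (hv : B v v ≠ 0) :
    LinearMap.det (bilinReflection B hv : L →ₗ[ℝ] L) = -1 :=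
  Module.det_reflection _

end BilinearForm

section Step

variable {L : Type*} [AddCommGroup L] [Module ℝ L] [FiniteDimensional ℝ L]
  {B : L →ₗ[ℝ] L →ₗ[ℝ] ℝ}

theorem step_replace (hsymm : ∀ x y, B x y = B y x) {u v : L} (hu : 0 < B u u) (hv : 0 < B v v)
    (huv : B u v = 0) (γ : L) : Step B (u, γ) (u, v) :=
  Or.inr ⟨rfl, huv, posDefOn_span_pair_of_orthogonal hsymm hu hv huv,
    finrank_span_pair_of_orthogonal hu.ne' (show v ≠ 0 by rintro rfl; simp at hv) huv⟩

theorem step_reflection_trans_reflection (hsymm : ∀ x y, B x y = B y x) {p : L × L}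
    (hP : PosDefOn B (span ℝ {p.1, p.2})) {v w : L} (hv : B v v ≠ 0) (hw : B w w ≠ 0)
    (hvP : v ∈ span ℝ {p.1, p.2}) (hwP : w ∈ span ℝ {p.1, p.2}) :
    Step B p (((bilinReflection B hv).trans (bilinReflection B hw)) p.1,
      ((bilinReflection B hv).trans (bilinReflection B hw)) p.2) := by
  refine Or.inl ⟨hP, _, fun x y => ?_, ?_, fun x hx => ?_, fun y hy => ?_, rfl⟩
  · simp only [LinearEquiv.trans_apply, bilinReflection_isometry hsymm]
  · rw [LinearEquiv.coe_trans, LinearMap.det_comp, det_bilinReflection, det_bilinReflection]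
    norm_num
  · rw [LinearEquiv.trans_apply, bilinReflection_apply_of_orthogonal hv (hsymm v x ▸ hx v hvP),
      bilinReflection_apply_of_orthogonal hw (hsymm w x ▸ hx w hwP)]
  · rw [LinearEquiv.trans_apply, bilinReflection_apply, bilinReflection_apply]
    have hy' := Submodule.sub_mem _ hy (Submodule.smul_mem _ (2 / B v v * B v y) hvP)
    exact Submodule.sub_mem _ hy' (Submodule.smul_mem _ _ hwP)

theorem exists_step_neg (hsymm : ∀ x y, B x y = B y x) {u v z : L}
    (hP : PosDefOn B (span ℝ {u, v})) (hz : z ∈ span ℝ {u, v}) (hz0 : z ≠ 0) (hne : u ≠ z)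
    (huz : B u u = B z z) : ∃ γ, Step B (u, v) (-z, γ) := by
  have hu : u ∈ span ℝ {u, v} := Submodule.subset_span (by simp)
  have h₁ : B (u - z) (u - z) ≠ 0 := (hP _ (Submodule.sub_mem _ hu hz) (sub_ne_zero.mpr hne)).ne'
  have h₂ : B z z ≠ 0 := (hP z hz hz0).ne'
  have hstep :=
    step_reflection_trans_reflection (p := (u, v)) hsymm hP h₁ h₂ (Submodule.sub_mem _ hu hz) hz
  rw [LinearEquiv.trans_apply, bilinReflection_sub_apply hsymm huz,
    bilinReflection_apply_self] at hstep
  exact ⟨_, hstep⟩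

theorem exists_reflTransGen_step_smul_of_linearIndependent (hsymm : ∀ x y, B x y = B y x)
    {u z : L} (hind : LinearIndependent ℝ ![u, z]) (hP : PosDefOn B (span ℝ {u, z})) (γ : L) :
    ∃ c : ℝ, c ≠ 0 ∧ ∃ γ', ReflTransGen (Step B) (u, γ) (c • z, γ') := by
  have hu : u ∈ span ℝ {u, z} := Submodule.subset_span (by simp)
  have hz : z ∈ span ℝ {u, z} := Submodule.subset_span (by simp)
  have hz0 : z ≠ 0 := hind.ne_zero 1
  have huu : 0 < B u u := hP u hu (hind.ne_zero 0)
  have hzz : 0 < B z z := hP z hz hz0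
  -- replace `γ` by the component `v` of `z` orthogonal to `u`, then rotate in `span {u, v}`
  set v := z - (B u z / B u u) • u with hv
  have huv : B u v = 0 := by
    simp only [v, map_sub, map_smul, smul_eq_mul]
    field_simp
    ring
  have hspan : span ℝ {u, v} ≤ span ℝ {u, z} := by
    rw [Submodule.span_le, Set.insert_subset_iff, Set.singleton_subset_iff]
    exact ⟨hu, Submodule.sub_mem _ hz (Submodule.smul_mem _ _ hu)⟩
  have hv0 : v ≠ 0 := by
    intro h
    have := LinearIndependent.pair_iff.mp hind (-(B u z / B u u)) 1 (by rw [← h, hv]; module)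
    simp at this
  have hvv : 0 < B v v := hP.mono hspan v (Submodule.subset_span (by simp)) hv0
  set c := √(B u u / B z z)
  have hc : 0 < c := Real.sqrt_pos.mpr (div_pos huu hzz)
  have hcz : B u u = B (c • z) (c • z) := by
    rw [map_smul, map_smul, LinearMap.smul_apply, smul_eq_mul, smul_eq_mul, ← mul_assoc, ← sq,
      Real.sq_sqrt (div_pos huu hzz).le, div_mul_cancel₀ _ hzz.ne']
  have hczmem : c • z ∈ span ℝ {u, v} := by
    have : c • z = c • v + (c * (B u z / B u u)) • u := by rw [hv]; module
    rw [this]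
    exact Submodule.add_mem _ (Submodule.smul_mem _ _ (Submodule.subset_span (by simp)))
      (Submodule.smul_mem _ _ (Submodule.subset_span (by simp)))
  have hne : u ≠ c • z := by
    intro h
    have := LinearIndependent.pair_iff.mp hind 1 (-c) (by rw [neg_smul, ← h]; module)
    simp at this
  obtain ⟨γ', hrot⟩ :=
    exists_step_neg hsymm (hP.mono hspan) hczmem (smul_ne_zero hc.ne' hz0) hne hcz
  refine ⟨-c, neg_ne_zero.mpr hc.ne', γ', .tail (.single (step_replace hsymm huu hvv huv γ)) ?_⟩
  rwa [neg_smul]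

theorem exists_reflTransGen_step_smul (hsymm : ∀ x y, B x y = B y x) {u z : L} (hu : u ≠ 0)
    (hz : z ≠ 0) (hP : PosDefOn B (span ℝ {u, z})) (γ : L) :
    ∃ c : ℝ, c ≠ 0 ∧ ∃ γ', ReflTransGen (Step B) (u, γ) (c • z, γ') := by
  by_cases hind : LinearIndependent ℝ ![u, z]
  · exact exists_reflTransGen_step_smul_of_linearIndependent hsymm hind hP γ
  obtain ⟨a, rfl⟩ : ∃ a : ℝ, a • u = z := by
    simpa [LinearIndependent.pair_iff' hu] using hind
  have ha : a ≠ 0 := by rintro rfl; simp at hz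
  exact ⟨a⁻¹, inv_ne_zero ha, γ, by rw [smul_smul, inv_mul_cancel₀ ha, one_smul]⟩

end Step

theorem stmt19_general (L : Type*) [AddCommGroup L] [Module ℝ L] [FiniteDimensional ℝ L]
    (B : L →ₗ[ℝ] L →ₗ[ℝ] ℝ)
    (hsymm : ∀ x y, B x y = B y x)
    (hpos2 : ∃ W : Submodule ℝ L, PosDefOn B W ∧ finrank ℝ W = 2)
    (l : L) (hl : 0 < B l l)
    (ω γ : L) (hω : 0 < B ω ω) :
    ∃ ω' : L, Relation.ReflTransGen (Step B) (ω, γ) (ω', l) := by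
  obtain ⟨W, hW, hW2⟩ := hpos2
  obtain ⟨u, huW, hu, hωu⟩ := exists_mem_ne_zero_orthogonal B W (by omega) ω
  obtain ⟨w, hwW, hw, hlw⟩ := exists_mem_ne_zero_orthogonal B W (by omega) l
  have hω0 : ω ≠ 0 := by rintro rfl; simp at hω
  obtain ⟨c, hc, γ₁, hreach₁⟩ := exists_reflTransGen_step_smul hsymm hω0 hu
    (posDefOn_span_pair_of_orthogonal hsymm hω (hW u huW hu) hωu) γ
  have hcuW : c • u ∈ W := W.smul_mem c huW
  obtain ⟨d, hd, γ₂, hreach₂⟩ := exists_reflTransGen_step_smul hsymm (smul_ne_zero hc hu) hw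
    (hW.mono (Submodule.span_le.mpr (Set.insert_subset_iff.mpr ⟨hcuW, by simpa using hwW⟩))) γ₁
  have hwl : B (d • w) l = 0 := by rw [map_smul, LinearMap.smul_apply, hsymm, hlw, smul_zero]
  exact ⟨d • w, (hreach₁.trans hreach₂).tail
    (step_replace hsymm (hW _ (W.smul_mem d hwW) (smul_ne_zero hd hw)) hl hwl γ₂)⟩

theorem stmt19 (L : Type*) [AddCommGroup L] [Module ℝ L] [FiniteDimensional ℝ L]
    (B : L →ₗ[ℝ] L →ₗ[ℝ] ℝ)
    (hsymm : ∀ x y, B x y = B y x)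
    (hnd : ∀ x, (∀ y, B x y = 0) → x = 0)
    (hpos2 : ∃ W : Submodule ℝ L, PosDefOn B W ∧ finrank ℝ W = 2)
    (hmax2 : ∀ W : Submodule ℝ L, PosDefOn B W → finrank ℝ W ≤ 2)
    (l : L) (hl : 0 < B l l)
    (ω γ : L) (horth : B ω γ = 0) (hω : 0 < B ω ω) (hγ : 0 < B γ γ) :
    ∃ ω' : L, Relation.ReflTransGen (Step B) (ω, γ) (ω', l) :=
  stmt19_general L B hsymm hpos2 l hl ω γ hω
end
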